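/- Let Σ be a finite alphabet with a fixed linear order and let L ⊆ Σ^ω be an ω-language. Let S = (S_+, S_−) be a sample of ultimately periodic words, given as finite sets of pairs (u, v) ∈ Σ* × Σ⁺ representing the words u v^ω, that is consistent with L (every word of S_+ lies in L and no word of S_− does) and characteristic for ∼_L, i.e.: (i) every x ∈ mtr(L) is a prefix of some word of S_+, and (ii) for all û ∈ mr(L) and x ∈ mtr(L) with û ≁_L x there exists w ∈ Σ^ω such that ûw and xw are both words of S_+ ∪ S_− and ûw is a word of S_+ if and only if xw is a word of S_−. Let k = l_b + l_e², where l_b is the maximal length of u and l_e the maximal length of v over all pairs (u, v) in S_+ ∪ S_−. Then every û ∈ mr(L) is a prefix of some word of S_+ and satisfies |û| ≤ k. -/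

import Mathlib

/-- Concatenation of a finite word with an infinite word. -/
def catWord {α : Type*} (u : List α) (w : ℕ → α) : ℕ → α :=
  fun n => if h : n < u.length then u.get ⟨n, h⟩ else w (n - u.length)

open Classical in
/-- The ultimately periodic word `u v^ω` represented by the pair `p = (u, v)`
(meaningful when `v ≠ []`; an arbitrary letter is used otherwise). -/
noncomputable def upw {α : Type*} [Nonempty α] (p : List α × List α) : ℕ → α :=
  fun n =>
    if h : n < p.1.length then p.1.get ⟨n, h⟩
    else if h2 : p.2 = [] then Classical.arbitrary α
    else p.2.get ⟨(n - p.1.length) % p.2.length,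
      Nat.mod_lt _ (List.length_pos_iff.mpr h2)⟩

/-- `u` is a (finite) prefix of the infinite word `w`. -/
def IsPrefixW {α : Type*} (u : List α) (w : ℕ → α) : Prop :=
  ∀ i, (h : i < u.length) → w i = u.get ⟨i, h⟩

/-- The residual language `u⁻¹L = {w : uw ∈ L}`. -/
def Residual {α : Type*} (L : Set (ℕ → α)) (u : List α) : Set (ℕ → α) :=
  {w | catWord u w ∈ L}

/-- The set of finite prefixes of words of an ω-language `L`. -/
def prfL {α : Type*} (L : Set (ℕ → α)) : Set (List α) :=
  {u | ∃ w ∈ L, IsPrefixW u w}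

/-- Length-lexicographic order `u ⪯ v` on finite words over a linearly
ordered alphabet. -/
def llex {α : Type*} [LinearOrder α] (u v : List α) : Prop :=
  u.length < v.length ∨
    (u.length = v.length ∧ (u = v ∨ List.Lex (· < ·) u v))

/-- The set of minimal representatives of `∼_L`: length-lexicographically
minimal elements of `prf(L)` in their `∼_L`-class. -/
def mr {α : Type*} [LinearOrder α] (L : Set (ℕ → α)) : Set (List α) :=
  {u | u ∈ prfL L ∧ ∀ v : List α, Residual L v = Residual L u → llex u v}

/-- The set of minimal transition representatives of `∼_L`. -/
def mtr {α : Type*} [LinearOrder α] (L : Set (ℕ → α)) : Set (List α) :=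
  {x | ∃ u ∈ mr L, ∃ a : α, x = u ++ [a] ∧ x ∈ prfL L}

/-!
Every `û ∈ mr(L)` extends by one letter to an element of `mtr(L)`, so by (i) it is a prefix of a
positive sample word `u v^ω`. If `|û| > l_b + l_e²`, write `û = q s` with `|s| = l_e |v|`, so that
`|q| > l_b`. Then `q ∈ mr(L)`, `û ∈ mtr(L)` and `q ≁_L û` by minimality of `û`, and (ii) gives `w`
with `qw` and `ûw` sample words. Past position `|q|` both `u v^ω` and the sample word `ûw = q (s w)`
are periodic, with periods `|v|` and at most `l_e`, and they agree on `s`, which covers a common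
period. Hence `s w` has period `|s|`, i.e. `ûw = qw`, and this word would be both positive and
negative.
-/

open Function

section Words

variable {α : Type*}

theorem catWord_of_lt (u : List α) (w : ℕ → α) {n : ℕ} (h : n < u.length) :
    catWord u w n = u[n] := dif_pos h

theorem catWord_length_add (u : List α) (w : ℕ → α) (n : ℕ) :
    catWord u w (u.length + n) = w n := by
  simp [catWord]

theorem catWord_append (u s : List α) (w : ℕ → α) :
    catWord (u ++ s) w = catWord u (catWord s w) := by
  funext n
  rcases lt_or_ge n u.length with h | h
  · rw [catWord_of_lt _ _ (by simp; omega), catWord_of_lt _ _ h, List.getElem_append_left h]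
  · obtain ⟨m, rfl⟩ := Nat.exists_eq_add_of_le h
    rw [catWord_length_add]
    rcases lt_or_ge m s.length with h' | h'
    · rw [catWord_of_lt _ _ (by simp; omega), catWord_of_lt _ _ h',
        List.getElem_append_right (by omega)]
      simp
    · obtain ⟨j, rfl⟩ := Nat.exists_eq_add_of_le h'
      rw [show u.length + (s.length + j) = (u ++ s).length + j by simp; omega,
        catWord_length_add, catWord_length_add]

theorem catWord_eq_of_periodic {s : List α} {w : ℕ → α}
    (h : Periodic (catWord s w) s.length) : catWord s w = w :=
  funext fun n => by rw [← catWord_length_add s w n, add_comm, h]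

theorem IsPrefixW.of_prefix {u x : List α} {w : ℕ → α} (hux : u <+: x)
    (h : IsPrefixW x w) : IsPrefixW u w := fun i hi => by
  simpa [hux.getElem hi] using h i (hi.trans_le hux.length_le)

theorem IsPrefixW.concat {u : List α} {w : ℕ → α} (h : IsPrefixW u w) :
    IsPrefixW (u ++ [w u.length]) w := by
  intro i hi
  rw [List.length_append, List.length_singleton] at hi
  rcases (Nat.lt_succ_iff.mp hi).lt_or_eq with h' | rfl
  · simpa [List.getElem_append_left h'] using h i h'
  · simp

theorem IsPrefixW.drop_append {q s : List α} {w : ℕ → α} (h : IsPrefixW (q ++ s) w) :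
    IsPrefixW s (fun n => w (q.length + n)) := fun i hi => by
  simpa using h (q.length + i) (by simp; omega)

theorem IsPrefixW.catWord_apply {s : List α} {v w : ℕ → α} (h : IsPrefixW s v) {n : ℕ}
    (hn : n < s.length) : catWord s w n = v n := by
  rw [catWord_of_lt _ _ hn, h n hn, List.get_eq_getElem]

theorem Function.Periodic.eq_of_forall_lt {f g : ℕ → α} {c : ℕ} (hf : Periodic f c)
    (hg : Periodic g c) (hc : 0 < c) (h : ∀ n < c, f n = g n) : f = g :=
  funext fun n => by
    rw [← hf.map_mod_nat, ← hg.map_mod_nat]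
    exact h _ (Nat.mod_lt n hc)

theorem upw_periodic_shift [Nonempty α] {p : List α × List α} (hp : p.2 ≠ []) {i : ℕ}
    (hi : p.1.length ≤ i) : Periodic (fun n => upw p (i + n)) p.2.length := by
  intro n
  simp only [upw, dif_neg hp, dif_neg (show ¬ i + n < p.1.length by omega),
    dif_neg (show ¬ i + (n + p.2.length) < p.1.length by omega)]
  congr 2
  rw [show i + (n + p.2.length) - p.1.length = i + n - p.1.length + p.2.length by omega,
    Nat.add_mod_right]

end Words

section Representatives

variable {α : Type*} {L : Set (ℕ → α)}

theorem residual_append {u v : List α} (h : Residual L u = Residual L v) (s : List α) :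
    Residual L (u ++ s) = Residual L (v ++ s) := by
  ext w
  change catWord (u ++ s) w ∈ L ↔ catWord (v ++ s) w ∈ L
  rw [catWord_append, catWord_append]
  exact Set.ext_iff.mp h (catWord s w)

variable [LinearOrder α]

theorem List.append_lt_append_right {u v : List α} (s : List α) (h : u < v)
    (hl : u.length = v.length) : u ++ s < v ++ s := by
  induction h with
  | nil => simp at hl
  | cons _ ih => exact List.Lex.cons (ih (by simpa using hl))
  | rel h => exact List.Lex.rel h

theorem llex_of_llex_append {u v s : List α} (h : llex (u ++ s) (v ++ s)) : llex u v := by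
  simp only [llex, List.length_append] at h
  rcases h with h | ⟨hl, h⟩
  · exact Or.inl (by omega)
  have hl : u.length = v.length := by omega
  refine Or.inr ⟨hl, ?_⟩
  rcases lt_trichotomy u v with huv | rfl | hvu
  · exact Or.inr huv
  · exact Or.inl rfl
  · rcases h with h | h
    · exact Or.inl (List.append_cancel_right h)
    · exact absurd h (lt_asymm (List.append_lt_append_right s hvu hl.symm))

theorem mr_of_prefix {u x : List α} (hux : u <+: x) (hx : x ∈ mr L) : u ∈ mr L := by
  obtain ⟨⟨w, hw, hxw⟩, hmin⟩ := hx
  obtain ⟨s, rfl⟩ := hux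
  exact ⟨⟨w, hw, hxw.of_prefix (List.prefix_append u s)⟩,
    fun v hv => llex_of_llex_append (hmin _ (residual_append hv s))⟩

theorem mem_mtr_of_mem_mr {u : List α} (hu : u ∈ mr L) (hne : u ≠ []) : u ∈ mtr L :=
  ⟨u.dropLast, mr_of_prefix u.dropLast_prefix hu, u.getLast hne,
    (u.dropLast_append_getLast hne).symm, hu.1⟩

theorem exists_append_singleton_mem_mtr {u : List α} (hu : u ∈ mr L) :
    ∃ a, u ++ [a] ∈ mtr L := by
  obtain ⟨w, hw, huw⟩ := hu.1
  exact ⟨w u.length, u, hu, _, rfl, w, hw, huw.concat⟩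

theorem residual_ne_of_length_lt {u q : List α} (hu : u ∈ mr L) (hq : q.length < u.length) :
    Residual L q ≠ Residual L u := fun h => by
  rcases hu.2 q h with h' | ⟨h', -⟩ <;> omega

end Representatives

section Sample

variable {α : Type*} [Nonempty α]

theorem catWord_append_eq_of_upw {p p' : List α × List α} {q s : List α} {w : ℕ → α}
    (hp : p.2 ≠ []) (hp' : p'.2 ≠ []) (hq : p.1.length ≤ q.length)
    (hq' : p'.1.length ≤ q.length) (hpre : IsPrefixW (q ++ s) (upw p))
    (hs : p.2.length ∣ s.length) (hs' : p.2.length * p'.2.length ≤ s.length)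
    (hw : upw p' = catWord (q ++ s) w) :
    catWord (q ++ s) w = catWord q w := by
  have hper := upw_periodic_shift hp hq
  have hper' : Periodic (catWord s w) p'.2.length := by
    have := upw_periodic_shift hp' hq'
    simpa only [hw, catWord_append, catWord_length_add] using this
  have hpos : 0 < p.2.length * p'.2.length :=
    Nat.mul_pos (List.length_pos_iff.mpr hp) (List.length_pos_iff.mpr hp')
  have hsw : catWord s w = fun n => upw p (q.length + n) := by
    refine Periodic.eq_of_forall_lt (by simpa only [Nat.cast_id] using hper'.nat_mul p.2.length)
      ?_ hpos fun n hn => hpre.drop_append.catWord_apply (hn.trans_le hs')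
    rw [mul_comm]
    simpa only [Nat.cast_id] using hper.nat_mul p'.2.length
  obtain ⟨d, hd⟩ := hs
  have hs_per : Periodic (catWord s w) s.length := by
    rw [hd, mul_comm, hsw]
    exact hper.nat_mul d
  rw [catWord_append, catWord_eq_of_periodic hs_per]

theorem not_iff_of_disjoint [DecidableEq α] {Splus Sminus : Finset (List α × List α)}
    (hdisj : ∀ p ∈ Splus, ∀ q ∈ Sminus, upw p ≠ upw q) {x : ℕ → α}
    (hx : ∃ p ∈ Splus ∪ Sminus, upw p = x) :
    ¬ ((∃ p ∈ Splus, upw p = x) ↔ ∃ q ∈ Sminus, upw q = x) := by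
  obtain ⟨p, hp, rfl⟩ := hx
  rcases Finset.mem_union.mp hp with hp | hp
  · intro h
    obtain ⟨q, hq, he⟩ := h.mp ⟨p, hp, rfl⟩
    exact hdisj p hp q hq he.symm
  · intro h
    obtain ⟨q, hq, he⟩ := h.mpr ⟨p, hp, rfl⟩
    exact hdisj q hq p hp he

variable [LinearOrder α] {L : Set (ℕ → α)}

theorem exists_isPrefixW_of_mem_mr {S : Finset (List α × List α)}
    (hchar1 : ∀ x ∈ mtr L, ∃ p ∈ S, IsPrefixW x (upw p)) {u : List α} (hu : u ∈ mr L) :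
    ∃ p ∈ S, IsPrefixW u (upw p) := by
  obtain ⟨a, ha⟩ := exists_append_singleton_mem_mtr hu
  obtain ⟨p, hp, hpre⟩ := hchar1 _ ha
  exact ⟨p, hp, hpre.of_prefix (List.prefix_append u [a])⟩

end Sample

theorem mr_prefixes_and_bound {α : Type*} [Nonempty α] [LinearOrder α]
    (L : Set (ℕ → α))
    (Splus Sminus : Finset (List α × List α))
    (hred : ∀ p ∈ Splus ∪ Sminus, p.2 ≠ [])
    (hdisj : ∀ p ∈ Splus, ∀ q ∈ Sminus, upw p ≠ upw q)
    (hchar1 : ∀ x ∈ mtr L, ∃ p ∈ Splus, IsPrefixW x (upw p))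
    (hchar2 : ∀ u ∈ mr L, ∀ x ∈ mtr L, Residual L u ≠ Residual L x →
      ∃ w : ℕ → α,
        (∃ p ∈ Splus ∪ Sminus, upw p = catWord u w) ∧
        (∃ p ∈ Splus ∪ Sminus, upw p = catWord x w) ∧
        ((∃ p ∈ Splus, upw p = catWord u w) ↔
          ∃ q ∈ Sminus, upw q = catWord x w)) :
    ∀ u ∈ mr L,
      (∃ p ∈ Splus, IsPrefixW u (upw p)) ∧
      u.length ≤ (Splus ∪ Sminus).sup (fun p => p.1.length) +
        ((Splus ∪ Sminus).sup (fun p => p.2.length)) ^ 2 := by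
  set lb := (Splus ∪ Sminus).sup (fun p => p.1.length)
  set le := (Splus ∪ Sminus).sup (fun p => p.2.length)
  intro u hu
  obtain ⟨p, hp, hup⟩ := exists_isPrefixW_of_mem_mr hchar1 hu
  refine ⟨⟨p, hp, hup⟩, ?_⟩
  have hpS := Finset.mem_union_left Sminus hp
  have hk : p.2.length ≤ le := Finset.le_sup (f := fun p => p.2.length) hpS
  by_contra! hlong
  have hlk : p.2.length * le ≤ le ^ 2 := by rw [sq]; exact Nat.mul_le_mul_right le hk
  obtain ⟨q, s, rfl, hq, hs⟩ : ∃ q s, u = q ++ s ∧ lb < q.length ∧ s.length = p.2.length * le :=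
    ⟨u.take (u.length - p.2.length * le), u.drop (u.length - p.2.length * le),
      (List.take_append_drop _ _).symm, by simp; omega, by simp; omega⟩
  have hk0 : 0 < p.2.length := List.length_pos_iff.mpr (hred p hpS)
  have hs0 : 0 < s.length := hs ▸ Nat.mul_pos hk0 (hk0.trans_le hk)
  obtain ⟨w, -, ⟨p', hp', hw⟩, hiff⟩ := hchar2 q (mr_of_prefix (List.prefix_append q s) hu)
    _ (mem_mtr_of_mem_mr hu (List.ne_nil_of_length_pos (by simp; omega)))
    (residual_ne_of_length_lt hu (by simp; omega))
  have hpump := catWord_append_eq_of_upw (hred p hpS) (hred p' hp')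
    ((Finset.le_sup (f := fun p => p.1.length) hpS).trans hq.le)
    ((Finset.le_sup (f := fun p => p.1.length) hp').trans hq.le) hup (by simp [hs])
    (hs ▸ Nat.mul_le_mul_left _ (Finset.le_sup (f := fun p => p.2.length) hp')) hw
  rw [hpump] at hw hiff
  exact not_iff_of_disjoint hdisj ⟨p', hp', hw⟩ hiff
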